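/- arXiv:1806.08459 — 3 statements merged into one kernel-verified Lean document; each statement's English description precedes it below -/
import Mathlib

section
/- Let S = (d, N_1, ..., N_L) be a neural network architecture with L ≥ 2, let ρ : ℝ → ℝ be continuous and differentiable at some x_0 ∈ ℝ with ρ'(x_0) ≠ 0, and let Ω ⊆ ℝ^d have nonempty interior. If RNN_ρ^Ω(S) does not contain an infinite linearly independent family of functions (equivalently, RNN_ρ^Ω(S) is contained in a finite-dimensional subspace of the functions Ω → ℝ^{N_L}), then ρ is a polynomial. -/
open scoped BigOperators ENNReal NNReal Pointwise
open Filter MeasureTheory Topology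

abbrev NNLayer (N : ℕ → ℕ) (ℓ : ℕ) : Type :=
  (Fin (N (ℓ + 1)) → Fin (N ℓ) → ℝ) × (Fin (N (ℓ + 1)) → ℝ)

abbrev NNParams (L : ℕ) (N : ℕ → ℕ) : Type :=
  (ℓ : Fin L) → NNLayer N ℓ.val

noncomputable def nnAffine {N : ℕ → ℕ} {ℓ : ℕ} (W : NNLayer N ℓ) (x : Fin (N ℓ) → ℝ) :
    Fin (N (ℓ + 1)) → ℝ :=
  fun i => (∑ j, W.1 i j * x j) + W.2 i

noncomputable def nnHidden (ρ : ℝ → ℝ) :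
    (L : ℕ) → (N : ℕ → ℕ) → NNParams L N → (Fin (N 0) → ℝ) → Fin (N L) → ℝ
  | 0, _, _, x => x
  | L + 1, N, Φ, x =>
      nnHidden ρ L (fun k => N (k + 1))
        (fun ℓ => Φ ⟨ℓ.val + 1, Nat.succ_lt_succ ℓ.isLt⟩)
        (fun i => ρ (nnAffine (Φ ⟨0, Nat.succ_pos L⟩) x i))

noncomputable def nnRealization (ρ : ℝ → ℝ) :
    (L : ℕ) → (N : ℕ → ℕ) → NNParams L N → (Fin (N 0) → ℝ) → Fin (N L) → ℝ
  | 0, _, _, x => x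
  | L + 1, N, Φ, x =>
      nnAffine (Φ ⟨L, Nat.lt_succ_self L⟩)
        (nnHidden ρ L N (fun ℓ => Φ ⟨ℓ.val, Nat.lt_succ_of_lt ℓ.isLt⟩) x)

noncomputable def nnRealizationScalar (ρ : ℝ → ℝ) (L : ℕ) (N : ℕ → ℕ) (h : N L = 1)
    (Φ : NNParams L N) (x : Fin (N 0) → ℝ) : ℝ :=
  nnRealization ρ L N Φ x ⟨0, by rw [h]; exact Nat.one_pos⟩

noncomputable def nnScalingNorm {L : ℕ} {N : ℕ → ℕ} (Φ : NNParams L N) : ℝ :=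
  ⨆ ℓ : Fin L, ‖(Φ ℓ).1‖

noncomputable def nnTotalNorm {L : ℕ} {N : ℕ → ℕ} (Φ : NNParams L N) : ℝ :=
  nnScalingNorm Φ + ⨆ ℓ : Fin L, ‖(Φ ℓ).2‖

/-- The set of realizations of networks with architecture `(N 0, …, N L)`
and activation `ρ`, as functions on `Ω`. -/
def RNNset (ρ : ℝ → ℝ) (L : ℕ) (N : ℕ → ℕ) (Ω : Set (Fin (N 0) → ℝ)) :
    Set (Ω → Fin (N L) → ℝ) :=
  {f | ∃ Φ : NNParams L N, ∀ x : Ω, f x = nnRealization ρ L N Φ x.val}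

/-!
Realizations span a finite-dimensional, hence closed, space `V` of functions. The scalar map
`A y = c⁻¹ ρ y + (x₀ - c⁻¹ ρ x₀)` fixes `x₀` with `A' x₀ = 1`, so hidden layers built from `A`
and rescaled by `ε → 0` approximate the identity; hence every ridge function
`x ↦ ρ (w ⬝ x + b)` lies in `V`. Restricting to a line through an interior point of `Ω` and
dilating, the span `Z` of all `t ↦ ρ (a t + b)` is finite-dimensional. Averaging over small
translates shows that each element of `Z` is differentiable with derivative in `Z`. The
derivative `D` on `Z` satisfies `D ∘ δ₂ = 2 δ₂ ∘ D` for the dilation `δ₂`, so `D` is conjugate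
to `2 D`, hence nilpotent, and `ρ` is a polynomial.
-/

open Polynomial
noncomputable section

namespace Polynomial

lemma coeff_comp_C_mul_X {R : Type*} [CommSemiring R] (p : R[X]) (a : R) (k : ℕ) :
    (p.comp (C a * X)).coeff k = a ^ k * p.coeff k := by
  induction p using Polynomial.induction_on' with
  | add p q hp hq => simp [add_comp, hp, hq, mul_add]
  | monomial m b =>
    rw [monomial_comp, mul_pow, ← C_pow, ← mul_assoc, ← C_mul, coeff_C_mul_X_pow,
      coeff_monomial]
    split_ifs <;> simp_all [mul_comm]

lemma eq_X_pow_of_comp_C_mul_X {R : Type*} [CommRing R] [IsDomain R] {p : R[X]} {n : ℕ}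
    (hp : p.Monic) (hdeg : p.natDegree = n) {c : R} (hc : Function.Injective (c ^ · : ℕ → R))
    (h : p.comp (C c * X) = C (c ^ n) * p) : p = X ^ n := by
  ext k
  have hk := congrArg (coeff · k) h
  simp only [coeff_comp_C_mul_X, coeff_C_mul] at hk
  rw [coeff_X_pow]
  split_ifs with hkn
  · rw [hkn, ← hdeg]
    exact hp.coeff_natDegree
  · exact (mul_eq_mul_right_iff.1 hk).resolve_left fun h => hkn (hc h)

lemma exists_derivative_eq {K : Type*} [Field K] [CharZero K] (q : K[X]) :
    ∃ p : K[X], derivative p = q := by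
  induction q using Polynomial.induction_on' with
  | add q r hq hr =>
    obtain ⟨p, rfl⟩ := hq
    obtain ⟨p', rfl⟩ := hr
    exact ⟨p + p', derivative_add⟩
  | monomial m b =>
    refine ⟨monomial (m + 1) (b / (m + 1)), ?_⟩
    rw [derivative_monomial]
    congr 1
    push_cast
    field_simp

end Polynomial

lemma finiteDimensional_span_of_not_exists_linearIndependent {K M : Type*} [DivisionRing K]
    [AddCommGroup M] [Module K M] {S : Set M}
    (hS : ¬ ∃ f : ℕ → M, (∀ k, f k ∈ S) ∧ LinearIndependent K f) :
    FiniteDimensional K (Submodule.span K S) := by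
  obtain ⟨B, hBS, hspan, hli⟩ := exists_linearIndependent K S
  rw [← hspan]
  refine FiniteDimensional.span_of_finite K (Set.not_infinite.1 fun hB => hS ?_)
  let e := hB.natEmbedding
  exact ⟨fun k => e k, fun k => hBS (e k).2, hli.comp e e.injective⟩

lemma LinearMap.isNilpotent_of_comp_eq_smul_comp {K V : Type*} [Field K] [AddCommGroup V]
    [Module K V] [FiniteDimensional K V] {c : K} (hc : Function.Injective (c ^ · : ℕ → K))
    (f e : V →ₗ[K] V) (he : Function.Injective e) (h : f ∘ₗ e = c • (e ∘ₗ f)) :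
    IsNilpotent f := by
  -- `f` is conjugate to `c • f`, so its characteristic polynomial `χ` has `χ (c y) = cⁿ χ y`.
  have : Infinite K := Infinite.of_injective _ hc
  let e' := LinearEquiv.ofInjectiveEndo e he
  rw [LinearMap.isNilpotent_iff_charpoly]
  refine eq_X_pow_of_comp_C_mul_X f.charpoly_monic f.charpoly_natDegree hc
    (Polynomial.funext fun y => ?_)
  have hconj : (e'.symm : V →ₗ[K] V) ∘ₗ (algebraMap K _ (c * y) - f) ∘ₗ (e' : V →ₗ[K] V)
      = c • (algebraMap K _ y - f) := by
    ext v
    have hv : f (e' v) = c • e' (f v) := LinearMap.congr_fun h v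
    simp only [LinearMap.comp_apply, LinearMap.sub_apply, LinearMap.smul_apply,
      Module.algebraMap_end_apply, LinearEquiv.coe_coe, map_sub, map_smul, hv,
      LinearEquiv.symm_apply_apply, smul_sub, mul_smul]
  simp only [eval_comp, eval_mul, eval_C, eval_X, LinearMap.eval_charpoly]
  rw [← LinearMap.det_conj _ e'.symm, LinearEquiv.symm_symm, hconj, LinearMap.det_smul]

lemma Submodule.exists_finset_eq_zero_of_eq_zero_on {X K : Type*} [Field K]
    (U : Submodule K (X → K)) [FiniteDimensional K U] :
    ∃ T : Finset X, ∀ f ∈ U, (∀ x ∈ T, f x = 0) → f = 0 := by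
  classical
  induction hn : Module.finrank K U using Nat.strong_induction_on generalizing U with
  | _ n ih =>
    by_cases hU : ∀ f ∈ U, f = 0
    · exact ⟨∅, fun f hf _ => hU f hf⟩
    push Not at hU
    obtain ⟨f, hfU, hf⟩ := hU
    obtain ⟨x, hx⟩ := Function.ne_iff.1 hf
    let U' := U ⊓ LinearMap.ker (LinearMap.proj x : (X → K) →ₗ[K] K)
    have hlt : U' < U := lt_of_le_of_ne inf_le_left fun h => hx (h ▸ hfU).2
    obtain ⟨T, hT⟩ := ih _ (hn ▸ Submodule.finrank_lt_finrank_of_lt hlt) U' rfl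
    refine ⟨insert x T, fun g hg hgT => hT g ⟨hg, hgT x (Finset.mem_insert_self x T)⟩
      fun y hy => hgT y (Finset.mem_insert_of_mem hy)⟩

lemma Submodule.intervalIntegral_mem {X : Type*} (Z : Submodule ℝ (X → ℝ))
    [FiniteDimensional ℝ Z] {γ : ℝ → X → ℝ} (hγ : Continuous γ) (hmem : ∀ s, γ s ∈ Z)
    (a b : ℝ) : (fun x => ∫ s in a..b, γ s x) ∈ Z := by
  let e : Z ≃L[ℝ] (Fin (Module.finrank ℝ Z) → ℝ) :=
    (Module.finBasis ℝ Z).equivFun.toContinuousLinearEquiv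
  let F : ℝ → Fin (Module.finrank ℝ Z) → ℝ := fun s => e ⟨γ s, hmem s⟩
  have hF : Continuous F := e.continuous.comp (hγ.subtype_mk _)
  convert (e.symm (∫ s in a..b, F s)).2 using 1
  funext x
  let ev : Z →L[ℝ] ℝ := (ContinuousLinearMap.proj x).comp Z.subtypeL
  have := (ev.comp e.symm.toContinuousLinearMap).intervalIntegral_comp_comm
    (hF.intervalIntegrable (μ := MeasureTheory.volume) a b)
  simpa [ev, F] using this

lemma hasDerivAt_integral_comp_add {f : ℝ → ℝ} (hf : Continuous f) (h t : ℝ) :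
    HasDerivAt (fun t => ∫ s in (0 : ℝ)..h, f (t + s)) (f (t + h) - f t) t := by
  have hsub : (fun t => ∫ s in (0 : ℝ)..h, f (t + s)) =
      fun t => (∫ s in (0 : ℝ)..t + h, f s) - ∫ s in (0 : ℝ)..t, f s := by
    funext t
    rw [intervalIntegral.integral_comp_add_left, add_zero,
      intervalIntegral.integral_interval_sub_left (hf.intervalIntegrable _ _)
        (hf.intervalIntegrable _ _)]
  rw [hsub]
  exact ((hf.integral_hasStrictDerivAt 0 (t + h)).hasDerivAt.comp_add_const t h).sub
    (hf.integral_hasStrictDerivAt 0 t).hasDerivAt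

lemma tendsto_inv_smul_integral_comp_add {f : ℝ → ℝ} (hf : Continuous f) :
    Tendsto (fun h : ℝ => h⁻¹ • fun t => ∫ s in (0 : ℝ)..h, f (t + s)) (𝓝[≠] 0) (𝓝 f) := by
  refine tendsto_pi_nhds.2 fun t => ?_
  have hderiv := (hf.comp (continuous_const_add t)).integral_hasStrictDerivAt 0 0
  simpa using hasDerivAt_iff_tendsto_slope_zero.1 hderiv.hasDerivAt

def antiderivSubmodule (Z : Submodule ℝ (ℝ → ℝ)) : Submodule ℝ (ℝ → ℝ) where
  carrier := {f | ∃ g ∈ Z, ∀ t, HasDerivAt f (g t) t}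
  zero_mem' := ⟨0, Z.zero_mem, fun _ => hasDerivAt_const _ _⟩
  add_mem' := by
    rintro f₁ f₂ ⟨g₁, hg₁, hf₁⟩ ⟨g₂, hg₂, hf₂⟩
    exact ⟨g₁ + g₂, Z.add_mem hg₁ hg₂, fun t => (hf₁ t).add (hf₂ t)⟩
  smul_mem' := by
    rintro a f ⟨g, hg, hf⟩
    exact ⟨a • g, Z.smul_mem a hg, fun t => (hf t).const_smul a⟩

lemma exists_hasDerivAt_mem_of_finiteDimensional {Z : Submodule ℝ (ℝ → ℝ)}
    [FiniteDimensional ℝ Z] (hcont : ∀ f ∈ Z, Continuous f)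
    (htrans : ∀ f ∈ Z, ∀ a, (fun t => f (t + a)) ∈ Z) {f : ℝ → ℝ} (hf : f ∈ Z) :
    ∃ g ∈ Z, ∀ t, HasDerivAt f (g t) t := by
  -- `f` is the limit of its averages over translates, which lie in the closed subspace `U`.
  let U := Z ⊓ antiderivSubmodule Z
  have : FiniteDimensional ℝ U := Submodule.finiteDimensional_of_le inf_le_left
  have hfc := hcont f hf
  have hmem (h : ℝ) : h⁻¹ • (fun t => ∫ s in (0 : ℝ)..h, f (t + s)) ∈ U := by
    refine U.smul_mem _ ⟨Z.intervalIntegral_mem ?_ (htrans f hf) 0 h,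
      (fun t => f (t + h)) - f, Z.sub_mem (htrans f hf h) hf,
      hasDerivAt_integral_comp_add hfc h⟩
    exact continuous_pi fun t => hfc.comp (continuous_const_add t)
  exact (U.closed_of_finiteDimensional.mem_of_tendsto
    (tendsto_inv_smul_integral_comp_add hfc) (Eventually.of_forall hmem)).2

lemma exists_polynomial_of_deriv_eq {f : ℝ → ℝ} (hf : Differentiable ℝ f) {q : ℝ[X]}
    (hq : ∀ t, deriv f t = q.eval t) : ∃ p : ℝ[X], ∀ t, f t = p.eval t := by
  obtain ⟨P, hP⟩ := exists_derivative_eq q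
  have hconst := is_const_of_deriv_eq_zero (hf.sub P.differentiable) fun t => by
    rw [deriv_sub (hf t) (P.differentiable t), Polynomial.deriv, hP, hq, sub_self]
  refine ⟨P + C (f 0 - P.eval 0), fun t => ?_⟩
  have := hconst t 0
  simp only [Pi.sub_apply] at this
  rw [eval_add, eval_C]
  linarith

section InvariantSubspace

variable (Z : Submodule ℝ (ℝ → ℝ))

def derivEndo (hZ : ∀ f ∈ Z, ∃ g ∈ Z, ∀ t, HasDerivAt f (g t) t) :
    Z →ₗ[ℝ] Z where
  toFun f := ⟨deriv f, by
    obtain ⟨g, hg, hfg⟩ := hZ f f.2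
    rwa [show deriv (f : ℝ → ℝ) = g from funext fun t => (hfg t).deriv]⟩
  map_add' f g := by
    obtain ⟨f', -, hf⟩ := hZ f f.2
    obtain ⟨g', -, hg⟩ := hZ g g.2
    ext t
    exact deriv_add (hf t).differentiableAt (hg t).differentiableAt
  map_smul' a f := by
    obtain ⟨f', -, hf⟩ := hZ f f.2
    ext t
    exact deriv_const_smul a (hf t).differentiableAt

def dilation (hcomp : ∀ f ∈ Z, ∀ a b, (fun t => f (a * t + b)) ∈ Z) (a : ℝ) : Z →ₗ[ℝ] Z :=
  (LinearMap.funLeft ℝ ℝ (a * ·)).restrict fun f hf =>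
    (by simpa using hcomp f hf a 0 : (fun t => f (a * t)) ∈ Z)

variable {Z}

lemma derivEndo_comp_dilation (hZ : ∀ f ∈ Z, ∃ g ∈ Z, ∀ t, HasDerivAt f (g t) t)
    (hcomp : ∀ f ∈ Z, ∀ a b, (fun t => f (a * t + b)) ∈ Z) (a : ℝ) :
    derivEndo Z hZ ∘ₗ dilation Z hcomp a = a • (dilation Z hcomp a ∘ₗ derivEndo Z hZ) := by
  ext f t
  obtain ⟨g, -, hg⟩ := hZ f f.2
  have := (hg (a * t)).comp t ((hasDerivAt_id t).const_mul a)
  simp only [mul_one] at this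
  simp [derivEndo, dilation, LinearMap.funLeft, this.deriv, (hg (a * t)).deriv, mul_comm]

lemma dilation_injective (hcomp : ∀ f ∈ Z, ∀ a b, (fun t => f (a * t + b)) ∈ Z) {a : ℝ}
    (ha : a ≠ 0) : Function.Injective (dilation Z hcomp a) := by
  rw [← LinearMap.ker_eq_bot, LinearMap.ker_eq_bot']
  intro f hf
  ext t
  simpa [dilation, LinearMap.funLeft, mul_div_cancel₀ t ha] using
    congrFun (congrArg Subtype.val hf) (t / a)

theorem exists_polynomial_of_mem_of_affine_invariant [FiniteDimensional ℝ Z]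
    (hcont : ∀ f ∈ Z, Continuous f) (hcomp : ∀ f ∈ Z, ∀ a b, (fun t => f (a * t + b)) ∈ Z)
    {f : ℝ → ℝ} (hf : f ∈ Z) :
    ∃ p : ℝ[X], ∀ t, f t = p.eval t := by
  have hZ : ∀ f ∈ Z, ∃ g ∈ Z, ∀ t, HasDerivAt f (g t) t := fun f hf =>
    exists_hasDerivAt_mem_of_finiteDimensional hcont
      (fun f hf a => by simpa using hcomp f hf 1 a) hf
  obtain ⟨n, hn⟩ := LinearMap.isNilpotent_of_comp_eq_smul_comp
    (pow_right_injective₀ two_pos (by norm_num)) _ _ (dilation_injective hcomp two_ne_zero)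
    (derivEndo_comp_dilation hZ hcomp 2)
  suffices ∀ k (f : Z), (derivEndo Z hZ ^ k) f = 0 →
      ∃ p : ℝ[X], ∀ t, (f : ℝ → ℝ) t = p.eval t from
    this n ⟨f, hf⟩ (by simp [hn])
  intro k
  induction k with
  | zero => exact fun f hf => ⟨0, by simp [show f = 0 from hf]⟩
  | succ k ih =>
    intro f hf
    obtain ⟨q, hq⟩ := ih (derivEndo Z hZ f) (by rwa [← Module.End.mul_apply, ← pow_succ])
    obtain ⟨g, -, hg⟩ := hZ f f.2
    exact exists_polynomial_of_deriv_eq (fun t => (hg t).differentiableAt) hq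

end InvariantSubspace

def affineCompSpan (ρ : ℝ → ℝ) : Submodule ℝ (ℝ → ℝ) :=
  Submodule.span ℝ (Set.range fun p : ℝ × ℝ => fun t => ρ (p.1 * t + p.2))

namespace affineCompSpan

variable {ρ : ℝ → ℝ}

lemma self_mem : ρ ∈ affineCompSpan ρ :=
  Submodule.subset_span ⟨(1, 0), by simp⟩

lemma comp_mem {f : ℝ → ℝ} (hf : f ∈ affineCompSpan ρ) (a b : ℝ) :
    (fun t => f (a * t + b)) ∈ affineCompSpan ρ := by
  have : (affineCompSpan ρ).map (LinearMap.funLeft ℝ ℝ fun t => a * t + b) ≤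
      affineCompSpan ρ := by
    rw [affineCompSpan, Submodule.map_span, Submodule.span_le]
    rintro _ ⟨_, ⟨⟨a', b'⟩, rfl⟩, rfl⟩
    refine Submodule.subset_span ⟨(a' * a, a' * b + b'), funext fun t => ?_⟩
    simp only [LinearMap.funLeft_apply]
    congr 1
    ring
  exact this ⟨f, hf, rfl⟩

lemma continuous_of_mem (hρ : Continuous ρ) {f : ℝ → ℝ} (hf : f ∈ affineCompSpan ρ) :
    Continuous f := by
  induction hf using Submodule.span_induction with
  | mem g hg =>
    obtain ⟨⟨a, b⟩, rfl⟩ := hg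
    fun_prop
  | zero => exact continuous_const
  | add _ _ _ _ hf hg => exact hf.add hg
  | smul a _ _ hf => exact hf.const_smul a

lemma finiteDimensional_of_restrict {I : Set ℝ} (hI : I ∈ 𝓝 0) (W : Submodule ℝ (I → ℝ))
    [FiniteDimensional ℝ W] (hW : ∀ a b, (fun t : I => ρ (a * t + b)) ∈ W) :
    FiniteDimensional ℝ (affineCompSpan ρ) := by
  have hmap (γ : ℝ) :
      (affineCompSpan ρ).map (LinearMap.funLeft ℝ ℝ fun t : I => γ * t) ≤ W := by
    rw [affineCompSpan, Submodule.map_span, Submodule.span_le]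
    rintro _ ⟨_, ⟨⟨a, b⟩, rfl⟩, rfl⟩
    exact (by simpa [mul_assoc] using hW (a * γ) b : (fun t : I => ρ (a * (γ * t) + b)) ∈ W)
  refine Module.rank_lt_aleph0_iff.1 ?_
  refine lt_of_le_of_lt (rank_le (n := Module.finrank ℝ W) fun s hs => ?_)
    Cardinal.natCast_lt_aleph0
  let v : s → ℝ → ℝ := fun i => (i : affineCompSpan ρ)
  have : FiniteDimensional ℝ (Submodule.span ℝ (Set.range v)) :=
    FiniteDimensional.span_of_finite ℝ (Set.finite_range v)
  -- A dilation moves a finite set separating `span s` into `I`, keeping `s` independent.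
  obtain ⟨T, hT⟩ := (Submodule.span ℝ (Set.range v)).exists_finset_eq_zero_of_eq_zero_on
  obtain ⟨γ, hγ0, hγT⟩ : ∃ γ : ℝ, γ ≠ 0 ∧ ∀ x ∈ T, x / γ ∈ I := by
    refine ((eventually_ne_atTop 0).and ((eventually_all_finset T).2 fun x _ => ?_)).exists
    exact (tendsto_const_nhds.div_atTop tendsto_id) hI
  let L := LinearMap.funLeft ℝ ℝ fun t : I => γ * t
  have hli : LinearIndependent ℝ (L ∘ v) := by
    refine (hs.map' _ (Submodule.ker_subtype _)).map
      (Submodule.disjoint_def.2 fun f hf hLf => ?_)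
    refine hT f hf fun x hx => ?_
    simpa [L, mul_div_cancel₀ x hγ0] using congrFun (LinearMap.mem_ker.1 hLf) ⟨x / γ, hγT x hx⟩
  have hliW : LinearIndependent ℝ fun i =>
      (⟨L (v i), hmap γ ⟨v i, (i : affineCompSpan ρ).2, rfl⟩⟩ : W) :=
    LinearIndependent.of_comp W.subtype hli
  simpa using hliW.fintype_card_le_finrank

lemma finiteDimensional_of_ridge {ι : Type*} [Fintype ι]
    {Ω : Set (ι → ℝ)} (hΩ : (interior Ω).Nonempty) (j₀ : ι) (V : Submodule ℝ (Ω → ℝ))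
    [FiniteDimensional ℝ V]
    (hV : ∀ (w : ι → ℝ) b, (fun x : Ω => ρ (∑ j, w j * (x : ι → ℝ) j + b)) ∈ V) :
    FiniteDimensional ℝ (affineCompSpan ρ) := by
  classical
  obtain ⟨p, hp⟩ := hΩ
  let line : ℝ → ι → ℝ := fun t => p + t • Pi.single j₀ 1
  have hI : line ⁻¹' Ω ∈ 𝓝 0 := by
    have : ContinuousAt line 0 := by fun_prop
    exact this.preimage_mem_nhds (by simpa [line] using mem_interior_iff_mem_nhds.1 hp)
  let E : (Ω → ℝ) →ₗ[ℝ] (line ⁻¹' Ω → ℝ) :=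
    LinearMap.funLeft ℝ ℝ fun t => (⟨line t, t.2⟩ : Ω)
  refine finiteDimensional_of_restrict hI (V.map E) fun a b =>
    ⟨_, hV (Pi.single j₀ a) (b - a * p j₀), funext fun t => ?_⟩
  simp [E, line, Pi.single_apply]
  congr 1
  ring

end affineCompSpan

def meanLayer (N : ℕ → ℕ) (ℓ : ℕ) (α β : ℝ) : NNLayer N ℓ :=
  (fun _ _ => α / N ℓ, fun _ => β)

lemma nnAffine_meanLayer {N : ℕ → ℕ} {ℓ : ℕ} (hN : N ℓ ≠ 0) (α β s : ℝ) :
    nnAffine (meanLayer N ℓ α β) (fun _ => s) = fun _ => α * s + β := by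
  funext i
  simp only [nnAffine, meanLayer, Finset.sum_const, Finset.card_univ, Fintype.card_fin,
    nsmul_eq_mul]
  field_simp

lemma nnRealization_succ_succ (ρ : ℝ → ℝ) (L : ℕ) (N : ℕ → ℕ) (Φ : NNParams (L + 2) N)
    (x : Fin (N 0) → ℝ) :
    nnRealization ρ (L + 2) N Φ x =
      nnRealization ρ (L + 1) (fun k => N (k + 1)) (fun ℓ => Φ ℓ.succ)
        (fun i => ρ (nnAffine (Φ 0) x i)) :=
  rfl

lemma nnRealization_const_eq_iterate (ρ : ℝ → ℝ) (α β : ℝ) :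
    ∀ (L : ℕ) (N : ℕ → ℕ) (Φ : NNParams (L + 1) N) (α₀ β₀ s : ℝ),
    (∀ s, nnAffine (Φ 0) (fun _ : Fin (N 0) => s) = fun _ => α₀ * s + β₀) →
    (∀ (ℓ : Fin L) s, nnAffine (Φ ℓ.succ) (fun _ : Fin (N (ℓ + 1)) => s) = fun _ => α * s + β) →
    nnRealization ρ (L + 1) N Φ (fun _ => s) =
      fun _ => (fun y => α * ρ y + β)^[L] (α₀ * s + β₀)
  | 0, N, Φ, α₀, β₀, s, h0, _ => h0 s
  | L + 1, N, Φ, α₀, β₀, s, h0, hsucc => by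
    rw [nnRealization_succ_succ, h0, nnRealization_const_eq_iterate ρ α β L _ _ α β _
      (hsucc 0) (fun ℓ => hsucc ℓ.succ), Function.iterate_succ_apply]

/-- Layer `0` computes `w ⬝ x + b` in every neuron; on constant inputs, layer `1` acts as
`s ↦ α₀ s + β₀` and every later layer as `s ↦ α s + β`. -/
def ridgeNet {L : ℕ} {N : ℕ → ℕ} (w : Fin (N 0) → ℝ) (b α₀ β₀ α β : ℝ) :
    NNParams (L + 2) N :=
  Fin.cons (fun _ => w, fun _ => b)
    (Fin.cons (meanLayer N 1 α₀ β₀) fun ℓ => meanLayer N (ℓ + 2) α β)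

lemma nnRealization_ridgeNet (ρ : ℝ → ℝ) (L : ℕ) (N : ℕ → ℕ) (hN : ∀ ℓ ≤ L + 2, N ℓ ≠ 0)
    (w : Fin (N 0) → ℝ) (b α₀ β₀ α β : ℝ) (x : Fin (N 0) → ℝ) :
    nnRealization ρ (L + 2) N (ridgeNet w b α₀ β₀ α β) x =
      fun _ => (fun y => α * ρ y + β)^[L] (α₀ * ρ (∑ j, w j * x j + b) + β₀) :=
  nnRealization_const_eq_iterate ρ α β L (fun k => N (k + 1))
    (fun ℓ => ridgeNet (L := L) w b α₀ β₀ α β ℓ.succ) α₀ β₀ (ρ (∑ j, w j * x j + b))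
    (nnAffine_meanLayer (hN 1 (by omega)) α₀ β₀)
    (fun ℓ => nnAffine_meanLayer (hN (ℓ + 2) (by omega)) α β)

lemma ridge_mem_span_RNNset {L : ℕ} {N : ℕ → ℕ} (hN : ∀ ℓ ≤ L + 2, N ℓ ≠ 0) {ρ : ℝ → ℝ}
    {x₀ c : ℝ} (hd : HasDerivAt ρ c x₀) (hc : c ≠ 0) {Ω : Set (Fin (N 0) → ℝ)}
    [FiniteDimensional ℝ (Submodule.span ℝ (RNNset ρ (L + 2) N Ω))]
    (w : Fin (N 0) → ℝ) (b : ℝ) :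
    (fun (x : Ω) (_ : Fin (N (L + 2))) => ρ (∑ j, w j * (x : Fin (N 0) → ℝ) j + b)) ∈
      Submodule.span ℝ (RNNset ρ (L + 2) N Ω) := by
  set V := Submodule.span ℝ (RNNset ρ (L + 2) N Ω)
  set z : Ω → ℝ := fun x => ∑ j, w j * (x : Fin (N 0) → ℝ) j + b
  have hnet (α₀ β₀ α β : ℝ) : (fun (x : Ω) (_ : Fin (N (L + 2))) =>
      (fun y => α * ρ y + β)^[L] (α₀ * ρ (z x) + β₀)) ∈ V :=
    Submodule.subset_span ⟨ridgeNet w b α₀ β₀ α β,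
      fun x => (nnRealization_ridgeNet ρ L N hN w b α₀ β₀ α β x).symm⟩
  have hconst (y : ℝ) : (fun (_ : Ω) (_ : Fin (N (L + 2))) => y) ∈ V := by
    simpa [Function.iterate_fixed] using hnet 0 y 0 y
  -- `F` has the fixed point `x₀` with derivative `1`, so `ε⁻¹ (F (ε s + x₀) - x₀) → s`.
  set F := (fun y => c⁻¹ * ρ y + (x₀ - c⁻¹ * ρ x₀))^[L]
  have hFx₀ : F x₀ = x₀ := Function.iterate_fixed (by ring) L
  have hF : HasDerivAt F 1 x₀ := by
    simpa [inv_mul_cancel₀ hc] using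
      ((hd.const_mul c⁻¹).add_const (x₀ - c⁻¹ * ρ x₀)).iterate x₀ (by ring) L
  have hmem (ε : ℝ) : ε⁻¹ • ((fun (x : Ω) (_ : Fin (N (L + 2))) => F (ε * ρ (z x) + x₀)) -
      fun _ _ => x₀) ∈ V :=
    V.smul_mem _ (V.sub_mem (hnet ε x₀ c⁻¹ (x₀ - c⁻¹ * ρ x₀)) (hconst x₀))
  refine V.closed_of_finiteDimensional.mem_of_tendsto (b := 𝓝[≠] 0) ?_
    (Eventually.of_forall hmem)
  refine tendsto_pi_nhds.2 fun x => tendsto_pi_nhds.2 fun _ => ?_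
  have hinner : HasDerivAt (fun ε => ε * ρ (z x) + x₀) (ρ (z x)) 0 := by
    simpa using ((hasDerivAt_id (0 : ℝ)).mul_const (ρ (z x))).add_const x₀
  have := (show HasDerivAt F 1 (0 * ρ (z x) + x₀) by simpa using hF).comp 0 hinner
  simpa [hFx₀] using hasDerivAt_iff_tendsto_slope_zero.1 this

end

/-- If the set of realizations does not contain an infinite linearly
independent family of functions, then the activation function is a polynomial. -/
theorem stmt15 (L : ℕ) (hL : 2 ≤ L) (N : ℕ → ℕ) (hN : ∀ ℓ ≤ L, 0 < N ℓ)
    (ρ : ℝ → ℝ) (hcont : Continuous ρ)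
    (hderiv : ∃ x₀ c : ℝ, HasDerivAt ρ c x₀ ∧ c ≠ 0)
    (Ω : Set (Fin (N 0) → ℝ)) (hΩ : (interior Ω).Nonempty)
    (hfin : ¬ ∃ f : ℕ → (Ω → Fin (N L) → ℝ),
        (∀ k, f k ∈ RNNset ρ L N Ω) ∧ LinearIndependent ℝ f) :
    ∃ p : Polynomial ℝ, ∀ x : ℝ, ρ x = Polynomial.eval x p := by
  obtain ⟨x₀, c, hd, hc⟩ := hderiv
  obtain ⟨M, rfl⟩ : ∃ M, L = M + 2 := ⟨L - 2, by omega⟩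
  have := finiteDimensional_span_of_not_exists_linearIndependent hfin
  let i₀ : Fin (N (M + 2)) := ⟨0, hN _ le_rfl⟩
  have : FiniteDimensional ℝ (affineCompSpan ρ) :=
    affineCompSpan.finiteDimensional_of_ridge hΩ ⟨0, hN 0 (by omega)⟩
      ((Submodule.span ℝ (RNNset ρ (M + 2) N Ω)).map
        (LinearMap.compLeft (LinearMap.proj i₀) Ω))
      fun w b => ⟨_, ridge_mem_span_RNNset (fun ℓ hℓ => (hN ℓ hℓ).ne') hd hc w b, rfl⟩
  exact exists_polynomial_of_mem_of_affine_invariant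
    (fun _ => affineCompSpan.continuous_of_mem hcont) (fun _ => affineCompSpan.comp_mem)
    affineCompSpan.self_mem
end

section
/- Let μ be a finite Borel measure on [-B,B]^d (B > 0) whose support is uncountable. For x* ∈ ℝ^d and v ∈ ℝ^d with |v| = 1, let H_+(x*, v) := { x ∈ ℝ^d : ⟨x - x*, v⟩ > 0 } and H_-(x*, v) := { x ∈ ℝ^d : ⟨x - x*, v⟩ < 0 }. Then there exist x* ∈ [-B,B]^d and a unit vector v ∈ ℝ^d such that: whenever f : [-B,B]^d → ℝ satisfies f(x) = c for all x ∈ [-B,B]^d ∩ H_+(x*, v) and f(x) = c' for all x ∈ [-B,B]^d ∩ H_-(x*, v) with constants c ≠ c', there is no continuous function g : [-B,B]^d → ℝ with f = g μ-almost everywhere. -/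
open MeasureTheory

/-- The (topological) support of a measure: points all of whose open neighbourhoods
have positive measure. -/
def measureSupport {α : Type*} [TopologicalSpace α] [MeasurableSpace α]
    (μ : Measure α) : Set α :=
  {x | ∀ U : Set α, IsOpen U → x ∈ U → 0 < μ U}

/-!
Say that `S` accumulates at `x` on both sides of `v` if there are points of `S` arbitrarily close
to `x` on both sides of the hyperplane through `x` normal to `v`. If this fails at every `x ∈ S`
for every unit `v`, then at each `x ∈ S` the unit directions from `x` to nearby points of `S` have
at most one cluster point on the compact sphere, since two distinct ones `u₁ ≠ u₂` would work
with `v ∥ u₁ - u₂`; so these directions converge. Sorting the points of `S` by a point `c` of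
a countable dense set close to their limit direction and a radius `1/(n+1)` on which all directions
stay within `1` of `c`, each class is `1/(n+1)`-separated, because the directions from `x` to `y`
and from `y` to `x` are opposite. Hence `S` is countable.

Apply this to the support of `μ`: every neighbourhood of the resulting point `x` meets both open
half-spaces in sets of positive measure, so a function continuous on the cube and equal to `f`
almost everywhere takes both values `c` and `c'` at `x`.
-/

open Filter Topology Set Metric RealInnerProductSpace

theorem Set.Pairwise.countable_of_le_dist {X : Type*} [PseudoMetricSpace X]
    [SecondCountableTopology X] {s : Set X} {δ : ℝ} (hδ : 0 < δ)
    (hs : s.Pairwise fun x y => δ ≤ dist x y) : s.Countable := by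
  refine (HereditarilyLindelofSpace.isLindelof s).countable_of_isDiscrete <|
    isDiscrete_iff_forall_mem_exists_isOpen.2 fun x hx => ⟨ball x δ, isOpen_ball, ?_⟩
  refine eq_singleton_iff_unique_mem.2 ⟨⟨mem_ball_self hδ, hx⟩, fun y ⟨hy, hys⟩ => ?_⟩
  by_contra hne
  exact (hs hys hx hne).not_gt (mem_ball.1 hy)

section UnitDir

variable {E : Type*} [NormedAddCommGroup E] [NormedSpace ℝ E]

noncomputable def unitDir (x p : E) : E := ‖p - x‖⁻¹ • (p - x)

theorem norm_unitDir {x p : E} (h : p ≠ x) : ‖unitDir x p‖ = 1 :=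
  norm_smul_inv_norm (sub_ne_zero.2 h)

theorem unitDir_swap (x p : E) : unitDir p x = -unitDir x p := by
  rw [unitDir, unitDir, norm_sub_rev, ← smul_neg, neg_sub]

theorem countable_of_forall_tendsto_unitDir [SecondCountableTopology E] {S : Set E}
    (h : ∀ x ∈ S, ∃ u, Tendsto (unitDir x) (𝓝[S \ {x}] x) (𝓝 u)) : S.Countable := by
  obtain ⟨Z, hZc, hZd⟩ := TopologicalSpace.exists_countable_dense E
  let P : E → ℕ → Set E := fun c n =>
    {x ∈ S | ∀ p ∈ S, p ≠ x → dist p x < 1 / (n + 1) → dist (unitDir x p) c < 1}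
  have hcover : S ⊆ ⋃ c ∈ Z, ⋃ n, P c n := by
    intro x hx
    obtain ⟨u, hu⟩ := h x hx
    obtain ⟨c, hcZ, hc⟩ := hZd.exists_dist_lt u one_half_pos
    obtain ⟨ε, hε, hball⟩ := Metric.mem_nhdsWithin_iff.1 (hu (ball_mem_nhds u one_half_pos))
    obtain ⟨n, hn⟩ := exists_nat_one_div_lt hε
    refine mem_biUnion hcZ (mem_iUnion.2 ⟨n, hx, fun p hp hpx hpd => ?_⟩)
    have hpu : dist (unitDir x p) u < 1 / 2 := hball ⟨mem_ball.2 (hpd.trans hn), hp, hpx⟩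
    linarith [dist_triangle (unitDir x p) u c]
  refine (hZc.biUnion fun c _ => countable_iUnion fun n => ?_).mono hcover
  refine Pairwise.countable_of_le_dist (δ := 1 / (n + 1)) (by positivity) fun x hx y hy hxy => ?_
  by_contra! hlt
  have h₁ := hx.2 y hy.1 hxy.symm (by rwa [dist_comm])
  have h₂ := hy.2 x hx.1 hxy hlt
  rw [unitDir_swap] at h₂
  have h₃ : dist (unitDir x y) (-unitDir x y) = 2 := by
    rw [dist_eq_norm, sub_neg_eq_add, ← two_smul ℝ, norm_smul, norm_unitDir hxy.symm]
    norm_num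
  linarith [dist_triangle_right (unitDir x y) (-unitDir x y) c]

end UnitDir

section InnerProduct

variable {E : Type*} [NormedAddCommGroup E] [InnerProductSpace ℝ E]

def AccumulatesOnBothSides (S : Set E) (x v : E) : Prop :=
  x ∈ closure (S ∩ {p | 0 < ⟪p - x, v⟫}) ∧ x ∈ closure (S ∩ {p | ⟪p - x, v⟫ < 0})

theorem mem_closure_inter_inner_pos_of_mapClusterPt {S : Set E} {x u v : E}
    (hu : MapClusterPt u (𝓝[S \ {x}] x) (unitDir x)) (huv : 0 < ⟪u, v⟫) :
    x ∈ closure (S ∩ {p | 0 < ⟪p - x, v⟫}) := by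
  have hopen : {w : E | 0 < ⟪w, v⟫} ∈ 𝓝 u :=
    (isOpen_lt continuous_const (continuous_id.inner continuous_const)).mem_nhds huv
  rw [mem_closure_iff_frequently]
  refine ((hu.frequently hopen).and_eventually self_mem_nhdsWithin).filter_mono
    nhdsWithin_le_nhds |>.mono ?_
  rintro p ⟨hpv, hpS, -⟩
  rw [unitDir, real_inner_smul_left] at hpv
  exact ⟨hpS, pos_of_mul_pos_right hpv (inv_nonneg.2 (norm_nonneg _))⟩

theorem accumulatesOnBothSides_of_mapClusterPt_ne {S : Set E} {x u₁ u₂ : E}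
    (h₁ : ‖u₁‖ = 1) (h₂ : ‖u₂‖ = 1) (hne : u₁ ≠ u₂)
    (hu₁ : MapClusterPt u₁ (𝓝[S \ {x}] x) (unitDir x))
    (hu₂ : MapClusterPt u₂ (𝓝[S \ {x}] x) (unitDir x)) :
    ∃ v, ‖v‖ = 1 ∧ AccumulatesOnBothSides S x v := by
  have hd : 0 < ‖u₁ - u₂‖⁻¹ := inv_pos.2 (norm_pos_iff.2 (sub_ne_zero.2 hne))
  have hlt : ⟪u₁, u₂⟫ < 1 := by
    have := norm_sub_sq_real u₁ u₂
    rw [h₁, h₂] at this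
    nlinarith [norm_pos_iff.2 (sub_ne_zero.2 hne)]
  have e₁ : ⟪u₁, u₁ - u₂⟫ = 1 - ⟪u₁, u₂⟫ := by
    rw [inner_sub_right, real_inner_self_eq_norm_sq, h₁, one_pow]
  have e₂ : ⟪u₂, u₁ - u₂⟫ = ⟪u₁, u₂⟫ - 1 := by
    rw [inner_sub_right, real_inner_self_eq_norm_sq, h₂, one_pow, real_inner_comm]
  refine ⟨‖u₁ - u₂‖⁻¹ • (u₁ - u₂), norm_smul_inv_norm (sub_ne_zero.2 hne),
    mem_closure_inter_inner_pos_of_mapClusterPt hu₁ ?_, ?_⟩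
  · rw [real_inner_smul_right, e₁]
    exact mul_pos hd (by linarith)
  · have := mem_closure_inter_inner_pos_of_mapClusterPt hu₂
      (v := -(‖u₁ - u₂‖⁻¹ • (u₁ - u₂))) (by
        rw [inner_neg_right, real_inner_smul_right, e₂]
        nlinarith)
    simpa only [inner_neg_right, neg_pos] using this

theorem tendsto_unitDir_of_not_accumulatesOnBothSides [ProperSpace E] {S : Set E} {x : E}
    (h : ∀ v, ‖v‖ = 1 → ¬ AccumulatesOnBothSides S x v) :
    ∃ u, Tendsto (unitDir x) (𝓝[S \ {x}] x) (𝓝 u) := by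
  have hmem : ∀ᶠ p in 𝓝[S \ {x}] x, unitDir x p ∈ sphere (0 : E) 1 :=
    eventually_nhdsWithin_of_forall fun p hp => mem_sphere_zero_iff_norm.2 (norm_unitDir hp.2)
  by_cases hc : ∃ u ∈ sphere (0 : E) 1, MapClusterPt u (𝓝[S \ {x}] x) (unitDir x)
  · obtain ⟨u, hu, hcl⟩ := hc
    refine ⟨u, (isCompact_sphere 0 1).tendsto_nhds_of_unique_mapClusterPt hmem
      fun w hw hwcl => ?_⟩
    by_contra hne
    obtain ⟨v, hv, hboth⟩ := accumulatesOnBothSides_of_mapClusterPt_ne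
      (mem_sphere_zero_iff_norm.1 hw) (mem_sphere_zero_iff_norm.1 hu) hne hwcl hcl
    exact h v hv hboth
  · push Not at hc
    exact ⟨0, (isCompact_sphere 0 1).tendsto_nhds_of_unique_mapClusterPt hmem
      fun w hw hwcl => (hc w hw hwcl).elim⟩

theorem exists_accumulatesOnBothSides_of_not_countable [FiniteDimensional ℝ E] {S : Set E}
    (hS : ¬ S.Countable) : ∃ x ∈ S, ∃ v, ‖v‖ = 1 ∧ AccumulatesOnBothSides S x v := by
  by_contra! h
  exact hS (countable_of_forall_tendsto_unitDir fun x hx =>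
    tendsto_unitDir_of_not_accumulatesOnBothSides (h x hx))

end InnerProduct

theorem measureSupport_subset_of_isClosed {X : Type*} [TopologicalSpace X] [MeasurableSpace X]
    {μ : Measure X} {C : Set X} (hC : IsClosed C) (hμ : μ Cᶜ = 0) : measureSupport μ ⊆ C :=
  fun _ hx => by_contra fun hxC => (hx Cᶜ hC.isOpen_compl hxC).ne' hμ

theorem eq_of_mem_closure_measureSupport_inter {X Y : Type*} [TopologicalSpace X]
    [MeasurableSpace X] [TopologicalSpace Y] [T1Space Y] {μ : Measure X} {C U : Set X}
    {f g : X → Y} {x : X} {c : Y} (hC : μ Cᶜ = 0) (hfg : f =ᵐ[μ] g)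
    (hg : ContinuousWithinAt g C x) (hU : IsOpen U) (hf : ∀ y ∈ C, y ∈ U → f y = c)
    (hx : x ∈ closure (measureSupport μ ∩ U)) : g x = c := by
  let T := {y | y ∈ C ∧ g y = c}
  have hT : ∀ᵐ y ∂μ, y ∈ U → y ∈ T := by
    filter_upwards [hfg, mem_ae_iff.2 hC] with y hfy hyC hyU
    exact ⟨hyC, hfy ▸ hf y hyC hyU⟩
  have hxT : x ∈ closure T := by
    refine mem_closure_iff.2 fun W hW hxW => ?_
    obtain ⟨z, hzW, hzS, hzU⟩ := mem_closure_iff.1 hx W hW hxW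
    obtain ⟨y, ⟨hyW, hyU⟩, hyT⟩ := Measure.exists_mem_of_measure_ne_zero_of_ae
      (hzS _ (hW.inter hU) ⟨hzW, hzU⟩).ne' (ae_restrict_of_ae hT)
    exact ⟨y, hyW, hyT hyU⟩
  have := (hg.mono fun y hy => hy.1).mem_closure hxT (t := {c}) fun y hy => hy.2
  rwa [closure_singleton] at this

theorem stmt18_general (d : ℕ) (B : ℝ)
    (μ : Measure (Fin d → ℝ))
    (hμsupp : μ (Set.Icc (fun _ => -B) (fun _ => B))ᶜ = 0)
    (huncount : ¬ (measureSupport μ).Countable) :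
    ∃ xs ∈ Set.Icc (fun _ => -B : Fin d → ℝ) (fun _ => B), ∃ v : Fin d → ℝ,
      (∑ i, v i ^ 2) = 1 ∧
      ∀ (f : (Fin d → ℝ) → ℝ) (c c' : ℝ), c ≠ c' →
        (∀ x ∈ Set.Icc (fun _ => -B : Fin d → ℝ) (fun _ => B),
          0 < (∑ i, (x i - xs i) * v i) → f x = c) →
        (∀ x ∈ Set.Icc (fun _ => -B : Fin d → ℝ) (fun _ => B),
          (∑ i, (x i - xs i) * v i) < 0 → f x = c') →
        ¬ ∃ g : (Fin d → ℝ) → ℝ,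
            ContinuousOn g (Set.Icc (fun _ => -B) (fun _ => B)) ∧ f =ᵐ[μ] g := by
  let e := EuclideanSpace.equiv (Fin d) ℝ
  have hSC := measureSupport_subset_of_isClosed isClosed_Icc hμsupp
  obtain ⟨x, hxS, v, hv, hpos, hneg⟩ :=
    exists_accumulatesOnBothSides_of_not_countable (S := e ⁻¹' measureSupport μ) fun h =>
      huncount (by simpa [image_preimage_eq _ e.surjective] using h.image e)
  let φ : (Fin d → ℝ) → ℝ := fun y => ∑ i, (y i - e x i) * e v i
  have hφ : Continuous φ := by fun_prop
  have hinner (p : EuclideanSpace ℝ (Fin d)) : ⟪p - x, v⟫ = φ (e p) := by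
    simp [φ, PiLp.inner_apply, e, mul_comm]
  have hpos' : e x ∈ closure (measureSupport μ ∩ {y | 0 < φ y}) :=
    e.continuous.continuousWithinAt.mem_closure hpos fun p hp =>
      ⟨hp.1, show 0 < φ (e p) from hinner p ▸ hp.2⟩
  have hneg' : e x ∈ closure (measureSupport μ ∩ {y | φ y < 0}) :=
    e.continuous.continuousWithinAt.mem_closure hneg fun p hp =>
      ⟨hp.1, show φ (e p) < 0 from hinner p ▸ hp.2⟩
  refine ⟨e x, hSC hxS, e v, by simpa [hv, e] using (EuclideanSpace.real_norm_sq_eq v).symm, ?_⟩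
  rintro f c c' hcc' hc hc' ⟨g, hg, hfg⟩
  have hgx := hg _ (hSC hxS)
  exact hcc' <|
    (eq_of_mem_closure_measureSupport_inter hμsupp hfg hgx (isOpen_lt continuous_const hφ) hc
      hpos').symm.trans
    (eq_of_mem_closure_measureSupport_inter hμsupp hfg hgx (isOpen_lt hφ continuous_const) hc'
      hneg')

/-- For a finite Borel measure on `[-B,B]^d` with uncountable support there
are a point `x*` and a (Euclidean) unit vector `v` such that no function which is constant
`c` on the open half-space `⟨x - x*, v⟩ > 0` and constant `c' ≠ c` on the open half-space
`⟨x - x*, v⟩ < 0` agrees `μ`-a.e. with a continuous function on `[-B,B]^d`. -/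
theorem stmt18 (d : ℕ) (B : ℝ) (hB : 0 < B)
    (μ : Measure (Fin d → ℝ)) (hfin : IsFiniteMeasure μ)
    (hμsupp : μ (Set.Icc (fun _ => -B) (fun _ => B))ᶜ = 0)
    (huncount : ¬ (measureSupport μ).Countable) :
    ∃ xs ∈ Set.Icc (fun _ => -B : Fin d → ℝ) (fun _ => B), ∃ v : Fin d → ℝ,
      (∑ i, v i ^ 2) = 1 ∧
      ∀ (f : (Fin d → ℝ) → ℝ) (c c' : ℝ), c ≠ c' →
        (∀ x ∈ Set.Icc (fun _ => -B : Fin d → ℝ) (fun _ => B),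
          0 < (∑ i, (x i - xs i) * v i) → f x = c) →
        (∀ x ∈ Set.Icc (fun _ => -B : Fin d → ℝ) (fun _ => B),
          (∑ i, (x i - xs i) * v i) < 0 → f x = c') →
        ¬ ∃ g : (Fin d → ℝ) → ℝ,
            ContinuousOn g (Set.Icc (fun _ => -B) (fun _ => B)) ∧ f =ᵐ[μ] g :=
  stmt18_general d B μ hμsupp huncount
end

section
/- Let 0 ≤ a < 1 and let ρ_a : ℝ → ℝ, ρ_a(x) = max{x, ax} be the parametric ReLU. Let α ∈ ℝ^d with |α| = 1, β ∈ ℝ, and set S_{α,β} := { x ∈ ℝ^d : ⟨α, x⟩ + β = 0 }, W_{α,β}^+ := { x : ⟨α, x⟩ + β > 0 }, and W_{α,β}^- := { x : ⟨α, x⟩ + β < 0 }. Let U ⊆ ℝ^d be open with U ∩ S_{α,β} ≠ ∅, and let f : U → ℝ be continuous such that f is affine-linear on U ∩ W_{α,β}^+ and affine-linear on U ∩ W_{α,β}^-. Then there exist c, κ ∈ ℝ and ζ ∈ ℝ^d such that f(x) = c · ρ_a(⟨α, x⟩ + β) + ⟨ζ, x⟩ + κ for all x ∈ U. -/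
/-!
Both affine pieces extend by continuity to the hyperplane `S`, so their difference is an affine
map vanishing on `U ∩ S`, a nonempty relatively open subset of `S`. Such a map vanishes on all of
`S` and is therefore a multiple `λ (⟨α, x⟩ + β)` of the defining form. As `ρ_a(t) - t` is `0` for
`t ≥ 0` and `(a - 1) t` for `t ≤ 0`, the choice `c = λ / (1 - a)` reproduces the jump `λ`.
-/

open Filter Topology

theorem LinearMap.exists_eq_smul_of_ker_le {K E : Type*} [Field K] [AddCommGroup E] [Module K E]
    {ℓ δ : E →ₗ[K] K} (hℓ : ℓ ≠ 0) (h : ker ℓ ≤ ker δ) : ∃ c : K, δ = c • ℓ := by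
  obtain ⟨v, hv⟩ := LinearMap.surjective hℓ 1
  refine ⟨δ v, LinearMap.ext fun x => ?_⟩
  have hx : x - ℓ x • v ∈ ker ℓ := by simp [hv]
  have := h hx
  simp only [mem_ker, map_sub, map_smul, smul_eq_mul] at this
  simp only [smul_apply, smul_eq_mul]
  linear_combination this

section HalfSpaces

variable {E : Type*} [AddCommGroup E] [Module ℝ E] [TopologicalSpace E] [ContinuousAdd E]
  [ContinuousSMul ℝ E]

theorem tendsto_add_smul_nhdsWithin_zero (x v : E) (s : Set ℝ) :
    Tendsto (fun t : ℝ => x + t • v) (𝓝[s] 0) (𝓝 x) :=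
  ((continuous_const.add (continuous_id.smul continuous_const)).tendsto' 0 x
    (by simp)).mono_left nhdsWithin_le_nhds

theorem eq_of_nonneg_of_eq_of_pos {ℓ : E →ₗ[ℝ] ℝ} (hℓ : ℓ ≠ 0) {β : ℝ} {U : Set E}
    (hU : IsOpen U) {f g : E → ℝ} (hf : ContinuousOn f U) (hg : ContinuousOn g U)
    (h : ∀ x ∈ U, 0 < ℓ x + β → f x = g x) : ∀ x ∈ U, 0 ≤ ℓ x + β → f x = g x := by
  intro x hx hx0
  rcases hx0.lt_or_eq with hpos | hzero
  · exact h x hx hpos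
  obtain ⟨v, hv⟩ := LinearMap.surjective hℓ 1
  have hline := tendsto_add_smul_nhdsWithin_zero x v (Set.Ioi 0)
  have hfg : f ∘ (fun t : ℝ => x + t • v) =ᶠ[𝓝[>] 0] g ∘ (fun t : ℝ => x + t • v) := by
    filter_upwards [hline.eventually (hU.mem_nhds hx), self_mem_nhdsWithin] with t htU ht
    refine h _ htU ?_
    simpa [hv, ← hzero, add_right_comm] using ht
  exact tendsto_nhds_unique (((hf.continuousAt (hU.mem_nhds hx)).tendsto.comp hline).congr' hfg)
    ((hg.continuousAt (hU.mem_nhds hx)).tendsto.comp hline)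

theorem exists_eq_mul_of_eq_zero_on_hyperplane {ℓ δ : E →ₗ[ℝ] ℝ} (hℓ : ℓ ≠ 0) {β ω : ℝ}
    {U : Set E} (hU : IsOpen U) {x₀ : E} (hx₀ : x₀ ∈ U) (hx₀S : ℓ x₀ + β = 0)
    (h : ∀ x ∈ U, ℓ x + β = 0 → δ x + ω = 0) : ∃ c : ℝ, ∀ x, δ x + ω = c * (ℓ x + β) := by
  have hker : LinearMap.ker ℓ ≤ LinearMap.ker δ := by
    intro v hv
    rw [LinearMap.mem_ker] at hv ⊢
    obtain ⟨t, htU, ht⟩ := ((tendsto_add_smul_nhdsWithin_zero x₀ v {0}ᶜ).eventually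
      (hU.mem_nhds hx₀)).and self_mem_nhdsWithin |>.exists
    have := h _ htU (by simp [hv, hx₀S])
    simp only [map_add, map_smul, smul_eq_mul] at this
    have h₀ := h x₀ hx₀ hx₀S
    exact (mul_eq_zero.1 (by linarith : t * δ v = 0)).resolve_left ht
  obtain ⟨c, rfl⟩ := LinearMap.exists_eq_smul_of_ker_le hℓ hker
  refine ⟨c, fun x => ?_⟩
  have := h x₀ hx₀ hx₀S
  simp only [LinearMap.smul_apply, smul_eq_mul] at this ⊢
  linear_combination this - c * hx₀S

theorem exists_eq_prelu_of_piecewise_affine {a : ℝ} (ha : a < 1) {ℓ ξp ξm : E →ₗ[ℝ] ℝ}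
    (hℓ : ℓ ≠ 0) {β ωp ωm : ℝ} {U : Set E} (hU : IsOpen U) (hUS : ∃ x ∈ U, ℓ x + β = 0)
    {f : E → ℝ} (hf : ContinuousOn f U) (hξp : Continuous ξp) (hξm : Continuous ξm)
    (hp : ∀ x ∈ U, 0 < ℓ x + β → f x = ξp x + ωp)
    (hm : ∀ x ∈ U, ℓ x + β < 0 → f x = ξm x + ωm) :
    ∃ c : ℝ, ∀ x ∈ U,
      f x = c * max (ℓ x + β) (a * (ℓ x + β)) + (ξp - c • ℓ) x + (ωp - c * β) := by
  have hp' : ∀ x ∈ U, 0 ≤ ℓ x + β → f x = ξp x + ωp :=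
    eq_of_nonneg_of_eq_of_pos hℓ hU hf (hξp.add continuous_const).continuousOn hp
  have hm' : ∀ x ∈ U, ℓ x + β ≤ 0 → f x = ξm x + ωm := fun x hx hx0 =>
    eq_of_nonneg_of_eq_of_pos (neg_ne_zero.2 hℓ) (β := -β) hU hf
      (hξm.add continuous_const).continuousOn
      (fun y hy hy0 => hm y hy (by simp only [LinearMap.neg_apply] at hy0; linarith)) x hx
      (by simp only [LinearMap.neg_apply]; linarith)
  obtain ⟨x₀, hx₀, hx₀S⟩ := hUS
  obtain ⟨k, hk⟩ := exists_eq_mul_of_eq_zero_on_hyperplane (δ := ξp - ξm) (ω := ωp - ωm) hℓ hU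
    hx₀ hx₀S fun x hx hxS => by
      simp only [LinearMap.sub_apply]
      linarith [hp' x hx hxS.ge, hm' x hx hxS.le]
  have hc : k / (1 - a) * (1 - a) = k := div_mul_cancel₀ k (by linarith)
  refine ⟨k / (1 - a), fun x hx => ?_⟩
  simp only [LinearMap.sub_apply, LinearMap.smul_apply, smul_eq_mul]
  rcases le_or_gt 0 (ℓ x + β) with hx0 | hx0
  · rw [hp' x hx hx0, max_eq_left (by nlinarith)]
    ring
  · have := hk x
    simp only [LinearMap.sub_apply] at this
    rw [hm' x hx hx0.le, max_eq_right (by nlinarith)]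
    linear_combination -this + (ℓ x + β) * hc

end HalfSpaces

theorem stmt19_general (d : ℕ) (a : ℝ) (ha1 : a < 1)
    (α : Fin d → ℝ) (hα : (∑ i, α i ^ 2) = 1) (β : ℝ)
    (U : Set (Fin d → ℝ)) (hU : IsOpen U)
    (hUS : ∃ x ∈ U, (∑ i, α i * x i) + β = 0)
    (f : (Fin d → ℝ) → ℝ) (hf : ContinuousOn f U)
    (hplus : ∃ (ξ : Fin d → ℝ) (ω : ℝ), ∀ x ∈ U,
      0 < (∑ i, α i * x i) + β → f x = (∑ i, ξ i * x i) + ω)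
    (hminus : ∃ (ξ : Fin d → ℝ) (ω : ℝ), ∀ x ∈ U,
      (∑ i, α i * x i) + β < 0 → f x = (∑ i, ξ i * x i) + ω) :
    ∃ (c κ : ℝ) (ζ : Fin d → ℝ), ∀ x ∈ U,
      f x = c * max ((∑ i, α i * x i) + β) (a * ((∑ i, α i * x i) + β))
            + (∑ i, ζ i * x i) + κ := by
  obtain ⟨ξp, ωp, hp⟩ := hplus
  obtain ⟨ξm, ωm, hm⟩ := hminus
  let D := dotProductEquiv ℝ (Fin d)
  have hα0 : D α ≠ 0 := (map_ne_zero_iff D D.injective).2 <| by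
    rintro rfl
    simp at hα
  obtain ⟨c, hc⟩ := exists_eq_prelu_of_piecewise_affine ha1 hα0 hU hUS hf
    (LinearMap.continuous_of_finiteDimensional (D ξp))
    (LinearMap.continuous_of_finiteDimensional (D ξm)) hp hm
  refine ⟨c, ωp - c * β, ξp - c • α, fun x hx => ?_⟩
  rw [hc x hx, ← map_smul, ← map_sub]
  rfl

/-- If `f` is continuous on an open set `U` meeting the hyperplane
`⟨α, x⟩ + β = 0` (`α` a Euclidean unit vector) and affine-linear on both open half-space
pieces of `U`, then on `U` it is of the form
`f x = c * ρ_a (⟨α, x⟩ + β) + ⟨ζ, x⟩ + κ`, where `ρ_a (t) = max {t, a t}` is the parametric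
ReLU with `0 ≤ a < 1`. -/
theorem stmt19 (d : ℕ) (a : ℝ) (ha0 : 0 ≤ a) (ha1 : a < 1)
    (α : Fin d → ℝ) (hα : (∑ i, α i ^ 2) = 1) (β : ℝ)
    (U : Set (Fin d → ℝ)) (hU : IsOpen U)
    (hUS : ∃ x ∈ U, (∑ i, α i * x i) + β = 0)
    (f : (Fin d → ℝ) → ℝ) (hf : ContinuousOn f U)
    (hplus : ∃ (ξ : Fin d → ℝ) (ω : ℝ), ∀ x ∈ U,
      0 < (∑ i, α i * x i) + β → f x = (∑ i, ξ i * x i) + ω)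
    (hminus : ∃ (ξ : Fin d → ℝ) (ω : ℝ), ∀ x ∈ U,
      (∑ i, α i * x i) + β < 0 → f x = (∑ i, ξ i * x i) + ω) :
    ∃ (c κ : ℝ) (ζ : Fin d → ℝ), ∀ x ∈ U,
      f x = c * max ((∑ i, α i * x i) + β) (a * ((∑ i, α i * x i) + β))
            + (∑ i, ζ i * x i) + κ :=
  stmt19_general d a ha1 α hα β U hU hUS f hf hplus hminus
end
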